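/- (Upper bound) Let A be the set of prime numbers and N ∈ ℕ. Then E[τ_N] ≤ Σ_{p prime, p ≥ N} (p − N) · (5/6)^{π(N, p−1)}, where the sum runs over all prime numbers p ≥ N. -/

import Mathlib

open MeasureTheory ProbabilityTheory
open scoped ENNReal NNReal

noncomputable section

/-- The cumulative sum `S_t^(s) = s + X_1 + ... + X_t`, where the die faces are
`ω 0 + 1, ω 1 + 1, ...` (each in `{1,...,6}`). -/
def partialSum (s : ℕ) (ω : ℕ → Fin 6) (t : ℕ) : ℕ :=
  s + ∑ j ∈ Finset.range t, ((ω j : ℕ) + 1)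

/-- The hitting time `τ_s = inf {t : S_t^(s) ∈ A}`, with value `⊤` if the sum never hits `A`. -/
def hitTime (A : Set ℕ) (s : ℕ) (ω : ℕ → Fin 6) : ℕ∞ :=
  sInf {t : ℕ∞ | ∃ n : ℕ, t = (n : ℕ∞) ∧ partialSum s ω n ∈ A}

/-- The expectation `E[τ_s]`, as a Lebesgue integral with values in `[0,∞]`. -/
def hitExp (P : Measure (ℕ → Fin 6)) (A : Set ℕ) (s : ℕ) : ℝ≥0∞ :=
  ∫⁻ ω, (hitTime A s ω : ℝ≥0∞) ∂P

/-- `π(s,n)`: the number of primes `p` with `s < p ≤ n` (for natural numbers `s`, `n`). -/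
def primesBetween (s n : ℕ) : ℕ :=
  ((Finset.Icc (s + 1) n).filter Nat.Prime).card


/-!
Split the walk according to the first prime it hits: if that prime is `p`, then `τ_N ≤ p - N`
and the walk has avoided every prime below `p`. So it suffices to show that a walk started at
`s` avoids a finite set `F` with probability at most `(5/6)^#{x ∈ F | s < x}`. This follows by
first-step analysis: if `k` of the six sites `s+1, …, s+6` lie in `F`, the first roll must miss
them (probability `(6-k)/6`), and from any site reached at most `k` elements of `F` beyond `s`
are lost; Bernoulli's inequality `(6-k)/6 ≤ (5/6)^k` closes the induction. A walk that never
hits a prime avoids all of them, which makes the right-hand side infinite.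
-/

open Finset

lemma ProbabilityTheory.iIndepFun.indepFun_head_tail {Ω β : Type*} [MeasurableSpace Ω]
    [MeasurableSpace β] {P : Measure Ω} {X : ℕ → Ω → β} (hX : iIndepFun X P)
    (hXm : ∀ n, Measurable (X n)) : IndepFun (X 0) (fun ω n => X (n + 1) ω) P := by
  have h := indep_iSup_of_disjoint (fun n => (hXm n).comap_le) hX.iIndep
    (S := {0}) (T := {n | 0 < n}) (by simp)
  refine indep_of_indep_of_le h (le_iSup₂_of_le 0 rfl le_rfl) ?_
  refine measurable_iff_comap_le.1 ?_
  rw [@measurable_pi_iff]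
  exact fun n => measurable_iff_comap_le.2 (le_iSup₂_of_le (n + 1) n.succ_pos le_rfl)

lemma partialSum_succ (s : ℕ) (y : ℕ → Fin 6) (t : ℕ) :
    partialSum s y (t + 1) = partialSum (s + y 0 + 1) (fun j => y (j + 1)) t := by
  simp only [partialSum, sum_range_succ']
  ring

lemma le_partialSum (s : ℕ) (y : ℕ → Fin 6) (t : ℕ) : s + t ≤ partialSum s y t := by
  simpa [partialSum] using card_nsmul_le_sum (range t) (fun j => (y j : ℕ) + 1) 1 (by simp)

lemma partialSum_mono (s : ℕ) (y : ℕ → Fin 6) : Monotone (partialSum s y) :=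
  fun _ _ h => Nat.add_le_add_left (sum_le_sum_of_subset (range_subset_range.2 h)) s

lemma measurable_partialSum (s t : ℕ) : Measurable fun y : ℕ → Fin 6 => partialSum s y t := by
  unfold partialSum
  fun_prop

def avoidSet (F : Finset ℕ) (s : ℕ) : Set (ℕ → Fin 6) := {y | ∀ t, partialSum s y t ∉ F}

lemma measurableSet_avoidSet (F : Finset ℕ) (s : ℕ) : MeasurableSet (avoidSet F s) := by
  simp only [avoidSet, Set.ofPred_forall]
  exact .iInter fun t =>
    measurable_partialSum s t (MeasurableSet.of_discrete (s := {n | n ∉ F}))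

lemma mem_avoidSet_iff {F : Finset ℕ} {s : ℕ} {y : ℕ → Fin 6} :
    y ∈ avoidSet F s ↔ s ∉ F ∧ (fun j => y (j + 1)) ∈ avoidSet F (s + y 0 + 1) := by
  simp only [avoidSet, Set.mem_ofPred_eq, ← partialSum_succ]
  constructor
  · exact fun h => ⟨by simpa [partialSum] using h 0, fun t => h (t + 1)⟩
  · rintro ⟨h0, h⟩ (_ | t)
    · simpa [partialSum] using h0
    · exact h t

def stepsInto (F : Finset ℕ) (s : ℕ) : Finset (Fin 6) := univ.filter fun e => s + e + 1 ∈ F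

lemma card_stepsInto_le (F : Finset ℕ) (s : ℕ) : #(stepsInto F s) ≤ #(F.filter (s < ·)) := by
  refine card_le_card_of_injOn (fun e => s + e + 1) (fun e he => ?_) fun a _ b _ h => ?_
  · simp only [stepsInto, coe_filter, mem_univ, true_and, Set.mem_ofPred_eq] at he ⊢
    exact ⟨he, by omega⟩
  · exact Fin.ext (by simpa using h)

lemma card_filter_lt_le_card_stepsInto_add (F : Finset ℕ) (s : ℕ) (d : Fin 6) :
    #(F.filter (s < ·)) ≤ #(stepsInto F s) + #(F.filter (s + d + 1 < ·)) := by
  calc #(F.filter (s < ·))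
      ≤ #((stepsInto F s).image (fun e : Fin 6 => s + (e : ℕ) + 1)
          ∪ F.filter (s + d + 1 < ·)) := by
        refine card_le_card fun q hq => ?_
        simp only [stepsInto, mem_filter, mem_union, mem_image, mem_univ, true_and] at hq ⊢
        by_cases hqd : s + d + 1 < q
        · exact Or.inr ⟨hq.1, hqd⟩
        · have hsq : s + (q - s - 1) + 1 = q := by omega
          exact Or.inl ⟨⟨q - s - 1, by omega⟩, by simpa [hsq] using hq.1, hsq⟩
    _ ≤ #(stepsInto F s) + #(F.filter (s + d + 1 < ·)) :=
        (card_union_le _ _).trans (Nat.add_le_add_right card_image_le _)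

lemma natCast_sub_mul_inv_le_pow (k : ℕ) : ((6 - k : ℕ) : ℝ≥0∞) * 6⁻¹ ≤ (5 / 6) ^ k := by
  have hreal : ((6 - k : ℕ) : ℝ) / 6 ≤ (5 / 6) ^ k := by
    rcases le_total k 6 with hk | hk
    · have := one_add_mul_le_pow (a := -(1 / 6 : ℝ)) (by norm_num) k
      rw [Nat.cast_sub hk]
      linarith
    · rw [Nat.sub_eq_zero_of_le hk, Nat.cast_zero, zero_div]
      positivity
  calc ((6 - k : ℕ) : ℝ≥0∞) * 6⁻¹ = ENNReal.ofReal (((6 - k : ℕ) : ℝ) / 6) := by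
        rw [ENNReal.ofReal_div_of_pos (by norm_num), ENNReal.ofReal_natCast, div_eq_mul_inv]
        norm_num
    _ ≤ ENNReal.ofReal ((5 / 6) ^ k) := ENNReal.ofReal_le_ofReal hreal
    _ = (5 / 6) ^ k := by
        rw [ENNReal.ofReal_pow (by norm_num), ENNReal.ofReal_div_of_pos (by norm_num)]
        norm_num

lemma sum_compl_stepsInto_le (F : Finset ℕ) (s : ℕ) :
    ∑ _d ∈ (stepsInto F s)ᶜ, 6⁻¹ * (5 / 6 : ℝ≥0∞) ^ (#(F.filter (s < ·)) - #(stepsInto F s))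
      ≤ (5 / 6) ^ #(F.filter (s < ·)) := by
  set k := #(stepsInto F s)
  calc ∑ _d ∈ (stepsInto F s)ᶜ, 6⁻¹ * (5 / 6 : ℝ≥0∞) ^ (#(F.filter (s < ·)) - k)
      = ((6 - k : ℕ) : ℝ≥0∞) * 6⁻¹ * (5 / 6) ^ (#(F.filter (s < ·)) - k) := by
        rw [sum_const, card_compl, Fintype.card_fin, nsmul_eq_mul, mul_assoc]
    _ ≤ (5 / 6) ^ k * (5 / 6) ^ (#(F.filter (s < ·)) - k) := by
        gcongr
        exact natCast_sub_mul_inv_le_pow k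
    _ = (5 / 6) ^ #(F.filter (s < ·)) := by
        rw [← pow_add, Nat.add_sub_cancel' (card_stepsInto_le F s)]

theorem measure_preimage_avoidSet_le {Ω : Type*} [MeasurableSpace Ω] {P : Measure Ω}
    {X : ℕ → Ω → Fin 6} (hX : iIndepFun X P) (hXm : ∀ n, Measurable (X n))
    (hU : ∀ n i, P {ω | X n ω = i} = 1 / 6) (F : Finset ℕ) (s : ℕ) :
    P ((fun ω j => X j ω) ⁻¹' avoidSet F s) ≤ (5 / 6) ^ #(F.filter (s < ·)) := by
  have := hX.isProbabilityMeasure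
  obtain ⟨n, hn⟩ : ∃ n, ∀ x ∈ F, x < s + n :=
    ⟨F.sup id + 1, fun x hx => by have := le_sup (f := id) hx; simp only [id] at this; omega⟩
  -- The tail `X (· + 1)` is again i.i.d. uniform, so the induction runs over all such sequences.
  induction n generalizing X s with
  | zero =>
    rw [filter_false_of_mem fun x hx => by have := hn x hx; omega, card_empty, pow_zero]
    exact prob_le_one
  | succ n ih =>
    set k := #(stepsInto F s)
    set c := #(F.filter (s < ·))
    have hstep : ∀ d ∈ (stepsInto F s)ᶜ, P (X 0 ⁻¹' {d} ∩
        (fun ω j => X (j + 1) ω) ⁻¹' avoidSet F (s + d + 1)) ≤ 6⁻¹ * (5 / 6) ^ (c - k) := by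
      intro d _
      rw [(hX.indepFun_head_tail hXm).measure_inter_preimage_eq_mul _ _
        (measurableSet_singleton d) (measurableSet_avoidSet F _)]
      gcongr
      · exact (hU 0 d).le.trans (by norm_num)
      · calc P ((fun ω j => X (j + 1) ω) ⁻¹' avoidSet F (s + d + 1))
            ≤ (5 / 6) ^ #(F.filter (s + d + 1 < ·)) :=
              ih (hX.precomp (g := (· + 1)) (add_left_injective 1)) (fun _ => hXm _)
                (fun _ => hU _) _ fun x hx => by have := hn x hx; omega
          _ ≤ (5 / 6) ^ (c - k) :=
              pow_le_pow_of_le_one (by positivity) (ENNReal.div_le_of_le_mul (by norm_num))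
                (Nat.sub_le_iff_le_add'.2 (card_filter_lt_le_card_stepsInto_add F s d))
    calc P ((fun ω j => X j ω) ⁻¹' avoidSet F s)
        ≤ P (⋃ d ∈ (stepsInto F s)ᶜ, X 0 ⁻¹' {d} ∩
            (fun ω j => X (j + 1) ω) ⁻¹' avoidSet F (s + d + 1)) := by
          refine measure_mono fun ω hω => ?_
          obtain ⟨-, htail⟩ := mem_avoidSet_iff.1 hω
          refine Set.mem_biUnion (x := X 0 ω) ?_ ⟨rfl, htail⟩
          simpa [stepsInto] using (mem_avoidSet_iff.1 htail).1
      _ ≤ ∑ d ∈ (stepsInto F s)ᶜ, P (X 0 ⁻¹' {d} ∩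
            (fun ω j => X (j + 1) ω) ⁻¹' avoidSet F (s + d + 1)) :=
          measure_biUnion_finset_le _ _
      _ ≤ ∑ _d ∈ (stepsInto F s)ᶜ, 6⁻¹ * (5 / 6) ^ (c - k) := sum_le_sum hstep
      _ ≤ (5 / 6) ^ c := sum_compl_stepsInto_le F s

lemma hitTime_le {A : Set ℕ} {s : ℕ} {ω : ℕ → Fin 6} {t : ℕ} (h : partialSum s ω t ∈ A) :
    hitTime A s ω ≤ t :=
  sInf_le ⟨t, rfl, h⟩

lemma mem_avoidSet_primesBelow_find {N : ℕ} {ω : ℕ → Fin 6} (h : ∃ t, (partialSum N ω t).Prime) :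
    ω ∈ avoidSet (partialSum N ω (Nat.find h)).primesBelow N := by
  intro t ht
  rw [Nat.mem_primesBelow] at ht
  rcases lt_or_ge t (Nat.find h) with hlt | hge
  · exact Nat.find_min h hlt ht.2
  · exact (partialSum_mono N ω hge).not_gt ht.1

lemma card_filter_primesBelow (N p : ℕ) :
    #((p.primesBelow).filter (N < ·)) = primesBetween N (p - 1) := by
  unfold primesBetween Nat.primesBelow
  congr 1
  ext q
  simp only [mem_filter, mem_range, mem_Icc]
  grind

lemma hitTime_le_tsum (N : ℕ) (ω : ℕ → Fin 6) :
    (hitTime {n | n.Prime} N ω : ℝ≥0∞) ≤ ∑' p : ℕ,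
      (if p.Prime ∧ N ≤ p then ((p - N : ℕ) : ℝ≥0∞) else 0)
        * (avoidSet p.primesBelow N).indicator 1 ω := by
  by_cases h : ∃ t, (partialSum N ω t).Prime
  · set t₀ := Nat.find h
    set p := partialSum N ω t₀
    have hp : p.Prime ∧ N ≤ p := ⟨Nat.find_spec h, (le_partialSum N ω t₀).trans' le_self_add⟩
    calc (hitTime {n | n.Prime} N ω : ℝ≥0∞) ≤ ((t₀ : ℕ∞) : ℝ≥0∞) :=
          ENat.toENNReal_le.2 (hitTime_le (Nat.find_spec h))
      _ ≤ ((p - N : ℕ) : ℝ≥0∞) := by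
          have := le_partialSum N ω t₀
          rw [ENat.toENNReal_coe]
          exact_mod_cast (show t₀ ≤ p - N by omega)
      _ = _ := by
          rw [if_pos hp, Set.indicator_of_mem (mem_avoidSet_primesBelow_find h), Pi.one_apply,
            mul_one]
      _ ≤ _ := ENNReal.le_tsum p
  · simp only [not_exists] at h
    refine le_top.trans (ENNReal.eq_top_of_forall_nnreal_le fun r => ?_).ge
    obtain ⟨p, hpr, hp⟩ := Nat.exists_infinite_primes (N + ⌈r⌉₊)
    have hω : ω ∈ avoidSet p.primesBelow N := fun t ht => h t (Nat.prime_of_mem_primesBelow ht)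
    calc (r : ℝ≥0∞) ≤ ((p - N : ℕ) : ℝ≥0∞) := by
          exact_mod_cast (Nat.le_ceil r).trans (Nat.cast_le.2 (by omega : ⌈r⌉₊ ≤ p - N))
      _ = _ := by
          rw [if_pos ⟨hp, by omega⟩, Set.indicator_of_mem hω, Pi.one_apply, mul_one]
      _ ≤ _ := ENNReal.le_tsum p

theorem hitExp_upper_bound_general
    (P : Measure (ℕ → Fin 6))
    (hIndep : iIndepFun (fun n (ω : ℕ → Fin 6) => ω n) P)
    (hUnif : ∀ (n : ℕ) (i : Fin 6), P {ω | ω n = i} = 1 / 6) (N : ℕ) :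
    hitExp P {n | n.Prime} N
      ≤ ∑' p : ℕ, if p.Prime ∧ N ≤ p then
          ((p - N : ℕ) : ℝ≥0∞) * (5 / 6 : ℝ≥0∞) ^ primesBetween N (p - 1)
        else 0 := by
  calc hitExp P {n | n.Prime} N
      ≤ ∫⁻ ω, ∑' p : ℕ, (if p.Prime ∧ N ≤ p then ((p - N : ℕ) : ℝ≥0∞) else 0)
          * (avoidSet p.primesBelow N).indicator 1 ω ∂P := lintegral_mono (hitTime_le_tsum N)
    _ = ∑' p : ℕ, (if p.Prime ∧ N ≤ p then ((p - N : ℕ) : ℝ≥0∞) else 0)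
          * P (avoidSet p.primesBelow N) := by
        rw [lintegral_tsum fun p => ((measurable_one.indicator
          (measurableSet_avoidSet _ N)).const_mul _).aemeasurable]
        congr with p
        rw [lintegral_const_mul _ (measurable_one.indicator (measurableSet_avoidSet _ N)),
          lintegral_indicator_one (measurableSet_avoidSet _ N)]
    _ ≤ _ := by
        refine ENNReal.tsum_le_tsum fun p => ?_
        split_ifs
        · rw [← card_filter_primesBelow]
          gcongr
          exact measure_preimage_avoidSet_le hIndep (fun n => measurable_pi_apply n) hUnif _ N
        · rw [zero_mul]

/-- Upper bound: for `A` the set of primes,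
`E[τ_N] ≤ Σ_{p prime, p ≥ N} (p − N) · (5/6)^{π(N, p−1)}`. -/
theorem hitExp_upper_bound
    (P : Measure (ℕ → Fin 6)) [IsProbabilityMeasure P]
    (hIndep : iIndepFun (fun n (ω : ℕ → Fin 6) => ω n) P)
    (hUnif : ∀ (n : ℕ) (i : Fin 6), P {ω | ω n = i} = 1 / 6) (N : ℕ) :
    hitExp P {n | n.Prime} N
      ≤ ∑' p : ℕ, if p.Prime ∧ N ≤ p then
          ((p - N : ℕ) : ℝ≥0∞) * (5 / 6 : ℝ≥0∞) ^ primesBetween N (p - 1)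
        else 0 :=
  hitExp_upper_bound_general P hIndep hUnif N
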